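/- Let δ > 0, Q_δ(a) = δ(⌊a/δ⌋ + 1/2), and let τ ∼ U([−δ/2, δ/2]). Then for any fixed reals x and y, P(Q_δ(x − τ) ≠ Q_δ(y − τ)) = min{|x − y|/δ, 1}. -/

import Mathlib

/-!
Since `Q_δ(a) = Q_δ(b)` exactly when `⌊a/δ⌋ = ⌊b/δ⌋`, the event is
`S = {τ | ⌊(x - τ)/δ⌋ ≠ ⌊(y - τ)/δ⌋}`, a set invariant under translation by `δℤ`. Hence its
measure inside any interval of length `δ` is the same, and inside `(x, x + δ]` (for `x ≤ y`)
the set `S` is just `(x, min (x + δ) y]`, of length `min (y - x) δ`.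
-/

open MeasureTheory

/-- The uniform (mid-point) quantizer with resolution `δ`. -/
noncomputable def Qdelta (δ a : ℝ) : ℝ := δ * (⌊a / δ⌋ + 1 / 2)

open Set

theorem Qdelta_eq_Qdelta_iff {δ : ℝ} (hδ : δ ≠ 0) {a b : ℝ} :
    Qdelta δ a = Qdelta δ b ↔ ⌊a / δ⌋ = ⌊b / δ⌋ := by
  simp [Qdelta, hδ]

section FloorNe

variable {δ : ℝ} (x y : ℝ)

theorem measurableSet_floor_sub_div_ne :
    MeasurableSet {τ : ℝ | ⌊(x - τ) / δ⌋ ≠ ⌊(y - τ) / δ⌋} := by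
  measurability

theorem preimage_vadd_zmultiples_floor_sub_div_ne (hδ : δ ≠ 0) (g : AddSubgroup.zmultiples δ) :
    (g +ᵥ ·) ⁻¹' {τ : ℝ | ⌊(x - τ) / δ⌋ ≠ ⌊(y - τ) / δ⌋}
      = {τ : ℝ | ⌊(x - τ) / δ⌋ ≠ ⌊(y - τ) / δ⌋} := by
  obtain ⟨_, n, rfl⟩ := g
  have hshift (z τ : ℝ) : ⌊(z - (n • δ + τ)) / δ⌋ = ⌊(z - τ) / δ⌋ - n := by
    rw [zsmul_eq_mul, ← Int.floor_sub_intCast]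
    congr 1
    field_simp
    ring
  ext τ
  simp only [mem_preimage, mem_ofPred_eq, AddSubgroup.vadd_def, vadd_eq_add, hshift, ne_eq,
    sub_left_inj]

theorem floor_sub_div_ne_iff_of_mem_Ioc (hδ : 0 < δ) (hxy : x ≤ y) {τ : ℝ}
    (hτ : τ ∈ Ioc x (x + δ)) : ⌊(x - τ) / δ⌋ ≠ ⌊(y - τ) / δ⌋ ↔ τ ≤ y := by
  have hfloor_eq_neg_one {z : ℝ} (hz : x ≤ z) : ⌊(z - τ) / δ⌋ = -1 ↔ z < τ := by
    rw [Int.floor_eq_iff, Int.cast_neg, Int.cast_one, neg_add_cancel, le_div_iff₀ hδ,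
      div_neg_iff, sub_neg]
    constructor
    · rintro ⟨-, ⟨-, h⟩ | ⟨h, -⟩⟩ <;> linarith
    · intro h
      exact ⟨by linarith [hτ.2], Or.inr ⟨h, hδ⟩⟩
  rw [(hfloor_eq_neg_one le_rfl).2 hτ.1, ne_comm, Ne, hfloor_eq_neg_one hxy, not_lt]

theorem floor_sub_div_ne_inter_Ioc (hδ : 0 < δ) (hxy : x ≤ y) :
    {τ : ℝ | ⌊(x - τ) / δ⌋ ≠ ⌊(y - τ) / δ⌋} ∩ Ioc x (x + δ) = Ioc x (min (x + δ) y) := by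
  ext τ
  rw [← Ioc_inter_Iic, inter_comm]
  exact and_congr_right (floor_sub_div_ne_iff_of_mem_Ioc x y hδ hxy)

theorem volume_floor_sub_div_ne_inter_Ioc (hδ : 0 < δ) (hxy : x ≤ y) (a : ℝ) :
    volume ({τ : ℝ | ⌊(x - τ) / δ⌋ ≠ ⌊(y - τ) / δ⌋} ∩ Ioc a (a + δ))
      = ENNReal.ofReal (min (y - x) δ) := by
  rw [(isAddFundamentalDomain_Ioc hδ a volume).measure_set_eq (isAddFundamentalDomain_Ioc hδ x)
      (measurableSet_floor_sub_div_ne x y) (preimage_vadd_zmultiples_floor_sub_div_ne x y hδ.ne'),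
    floor_sub_div_ne_inter_Ioc x y hδ hxy, Real.volume_Ioc, ← min_sub_sub_right,
    add_sub_cancel_left, min_comm]

end FloorNe

/-- For a dither `τ` uniformly distributed on `[-δ/2, δ/2]`,
`P(Q_δ(x - τ) ≠ Q_δ(y - τ)) = min {|x - y|/δ, 1}` for any fixed reals `x, y`. -/
theorem stmt_19 (δ : ℝ) (hδ : 0 < δ) (x y : ℝ) :
    (ENNReal.ofReal δ⁻¹ • volume.restrict (Set.Icc (-(δ / 2)) (δ / 2)))
        {τ : ℝ | Qdelta δ (x - τ) ≠ Qdelta δ (y - τ)}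
      = ENNReal.ofReal (min (|x - y| / δ) 1) := by
  wlog hxy : x ≤ y generalizing x y
  · simpa only [ne_comm, abs_sub_comm] using this y x (le_of_not_ge hxy)
  have hperiod := volume_floor_sub_div_ne_inter_Ioc x y hδ hxy (-(δ / 2))
  rw [show -(δ / 2) + δ = δ / 2 by ring] at hperiod
  simp only [Ne, Qdelta_eq_Qdelta_iff hδ.ne']
  rw [Measure.smul_apply, smul_eq_mul, ← Measure.restrict_congr_set Ioc_ae_eq_Icc,
    Measure.restrict_apply (measurableSet_floor_sub_div_ne x y), hperiod,
    ← ENNReal.ofReal_mul (inv_nonneg.2 hδ.le), mul_min_of_nonneg _ _ (inv_nonneg.2 hδ.le),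
    inv_mul_eq_div, inv_mul_cancel₀ hδ.ne', abs_sub_comm, abs_of_nonneg (sub_nonneg.2 hxy)]
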